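/- arXiv:2411.03839 — 3 statements merged into one kernel-verified Lean document; each statement's English description precedes it below -/
import Mathlib

section
/- Let 0 < p01 < p11 < 1, p00 = 1−p01, p10 = 1−p11. The unique C ∈ (p01, p11) satisfying D(C‖p01) = D(C‖p11) is given explicitly by C = ln(p00/p10) / ln((p11·p00)/(p01·p10)). -/
/-!
For fixed `p, q`, the map `c ↦ D(c‖p) - D(c‖q)` is affine in `c`, with slope
`ln (q(1-p) / (p(1-q)))` and value `-ln ((1-p)/(1-q))` at `c = 0`; so it has exactly one zero,
the claimed `C`. Gibbs' inequality gives the value `-D(p‖q) < 0` at `c = p` and `D(q‖p) > 0`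
at `c = q`, which places the zero strictly between `p` and `q`.
-/

/-- Binary Kullback–Leibler divergence `D(p‖q)`. -/
noncomputable def klBer (p q : ℝ) : ℝ :=
  p * Real.log (p / q) + (1 - p) * Real.log ((1 - p) / (1 - q))

open Real

-- `log_div` needs `c ≠ 0`; the factor `c` makes the identity hold at `c = 0` as well.
lemma mul_log_div_sub_mul_log_div (c : ℝ) {p q : ℝ} (hp : p ≠ 0) (hq : q ≠ 0) :
    c * log (c / p) - c * log (c / q) = c * (log q - log p) := by
  rcases eq_or_ne c 0 with rfl | hc
  · simp
  · rw [log_div hc hp, log_div hc hq]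
    ring

lemma klBer_sub_klBer (c : ℝ) {p q : ℝ} (hp : p ≠ 0) (hq : q ≠ 0) (hp' : 1 - p ≠ 0)
    (hq' : 1 - q ≠ 0) :
    klBer c p - klBer c q =
      c * log (q * (1 - p) / (p * (1 - q))) - log ((1 - p) / (1 - q)) := by
  have h₁ := mul_log_div_sub_mul_log_div c hp hq
  have h₂ := mul_log_div_sub_mul_log_div (1 - c) hp' hq'
  rw [log_div (mul_ne_zero hq hp') (mul_ne_zero hp hq'), log_mul hq hp', log_mul hp hq',
    log_div hp' hq']
  unfold klBer
  linear_combination h₁ + h₂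

@[simp]
lemma klBer_self (p : ℝ) : klBer p p = 0 := by
  rcases eq_or_ne p 0 with rfl | hp
  · simp [klBer]
  rcases eq_or_ne (1 - p) 0 with hp' | hp'
  · simp [klBer, hp']
  · simp [klBer, div_self hp, div_self hp']

lemma sub_lt_mul_log_div {a b : ℝ} (ha : 0 < a) (hb : 0 < b) (hab : a ≠ b) :
    a - b < a * log (a / b) := by
  have h := log_lt_sub_one_of_pos (div_pos hb ha) (div_ne_one_of_ne hab.symm)
  have := mul_lt_mul_of_pos_left h ha
  rw [mul_sub, mul_div_cancel₀ b ha.ne', mul_one, ← inv_div, log_inv] at this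
  linarith

theorem klBer_pos {p q : ℝ} (hp₀ : 0 < p) (hp₁ : p < 1) (hq₀ : 0 < q) (hq₁ : q < 1)
    (hpq : p ≠ q) : 0 < klBer p q := by
  have h₁ := sub_lt_mul_log_div hp₀ hq₀ hpq
  have h₂ := sub_lt_mul_log_div (sub_pos.2 hp₁) (sub_pos.2 hq₁) (by contrapose! hpq; linarith)
  unfold klBer
  linarith

theorem stmt2 (p01 p11 : ℝ) (h0 : 0 < p01) (h1 : p01 < p11) (h2 : p11 < 1) :
    Real.log ((1 - p01) / (1 - p11)) /
        Real.log ((p11 * (1 - p01)) / (p01 * (1 - p11))) ∈ Set.Ioo p01 p11 ∧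
    klBer (Real.log ((1 - p01) / (1 - p11)) /
        Real.log ((p11 * (1 - p01)) / (p01 * (1 - p11)))) p01 =
      klBer (Real.log ((1 - p01) / (1 - p11)) /
        Real.log ((p11 * (1 - p01)) / (p01 * (1 - p11)))) p11 ∧
    ∀ c ∈ Set.Ioo p01 p11, klBer c p01 = klBer c p11 →
      c = Real.log ((1 - p01) / (1 - p11)) /
        Real.log ((p11 * (1 - p01)) / (p01 * (1 - p11))) := by
  have hp11 : 0 < p11 := h0.trans h1
  set N := log ((1 - p01) / (1 - p11))
  set S := log (p11 * (1 - p01) / (p01 * (1 - p11)))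
  have key (c : ℝ) : klBer c p01 - klBer c p11 = c * S - N :=
    klBer_sub_klBer c h0.ne' hp11.ne' (by linarith) (by linarith)
  have at_p01 : p01 * S - N < 0 := by
    have := klBer_pos h0 (h1.trans h2) hp11 h2 h1.ne
    linarith [key p01, klBer_self p01]
  have at_p11 : 0 < p11 * S - N := by
    have := klBer_pos hp11 h2 h0 (h1.trans h2) h1.ne'
    linarith [key p11, klBer_self p11]
  have hS : 0 < S := by nlinarith
  refine ⟨⟨?_, ?_⟩, ?_, fun c _ hc => ?_⟩
  · rw [lt_div_iff₀ hS]; linarith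
  · rw [div_lt_iff₀ hS]; linarith
  · linarith [key (N / S), div_mul_cancel₀ N hS.ne']
  · rw [eq_div_iff hS.ne']; linarith [key c]
end

section
/- Let α ∈ (0,1), β > 0, and define ξ(α, β, Γ) = (−ln(1 − (1−α)^{Γ−1}·(1 − e^{−β})))^{−1} for positive integers Γ. Then for all Γ ≤ ⌈1/α⌉, we have β^{−1} ≤ ξ(α, β, Γ) ≤ e / ((1−α)(1 − e^{−β})). -/
/-! With `x = (1-α)^(Γ-1) (1-e^{-β}) ∈ (0, 1-e^{-β}]`, the lower bound is `-log(1-x) ≤ β`, i.e.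
`e^{-β} ≤ 1-x`. For the upper bound, `x ≤ -log(1-x)`, and `Γ - 1 < 1/α` together with
`log(1-α) ≥ -α/(1-α)` gives `(1-α)^(Γ-2) ≥ e^{-1}`, so `x ≥ (1-α)(1-e^{-β})/e`. -/

open Real

lemma neg_log_one_sub_le_of_le_one_sub_exp {x β : ℝ} (hx : x ≤ 1 - exp (-β)) :
    -log (1 - x) ≤ β := by
  have hexp : exp (-β) ≤ 1 - x := by linarith
  have := log_le_log (exp_pos _) hexp
  rw [log_exp] at this
  linarith

lemma le_neg_log_one_sub {x : ℝ} (hx : x < 1) : x ≤ -log (1 - x) := by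
  linarith [log_le_sub_one_of_pos (sub_pos.2 hx)]

lemma one_sub_le_exp_one_mul_pow {α : ℝ} (hα : α ∈ Set.Ioo (0 : ℝ) 1) {n : ℕ}
    (hn : (n : ℝ) ≤ 1 / α) : 1 - α ≤ exp 1 * (1 - α) ^ n := by
  obtain ⟨hα0, hα1⟩ := hα
  have hq : 0 < 1 - α := by linarith
  have hlog_le : log (1 - α) ≤ 0 := log_nonpos hq.le (by linarith)
  have hlog_ge : -(α / (1 - α)) ≤ log (1 - α) := by
    have h := one_sub_inv_le_log_of_pos hq
    have : 1 - (1 - α)⁻¹ = -(α / (1 - α)) := by field_simp; ring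
    linarith
  have hn' : ((n : ℝ) - 1) * α ≤ 1 - α := by
    have := (le_div_iff₀ hα0).1 hn
    linarith
  have hprod : -1 ≤ ((n : ℝ) - 1) * log (1 - α) := by
    rcases le_or_gt (n : ℝ) 1 with hn1 | hn1
    · nlinarith
    · have := mul_le_mul_of_nonneg_left hlog_ge (by linarith : (0 : ℝ) ≤ (n : ℝ) - 1)
      have hdiv : ((n : ℝ) - 1) * (α / (1 - α)) ≤ 1 := by
        rw [← mul_div_assoc, div_le_one hq]; exact hn'
      linarith
  calc 1 - α = exp (log (1 - α)) := (exp_log hq).symm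
    _ ≤ exp (1 + n * log (1 - α)) := exp_le_exp.2 (by linarith)
    _ = exp 1 * (1 - α) ^ n := by rw [exp_add, exp_nat_mul, exp_log hq]

theorem stmt5_general (α β : ℝ) (hα : α ∈ Set.Ioo (0:ℝ) 1) (hβ : 0 < β)
    (Γ : ℕ) (hΓle : Γ ≤ ⌈1 / α⌉₊) :
    β⁻¹ ≤ (-(Real.log (1 - (1 - α) ^ (Γ - 1) * (1 - Real.exp (-β)))))⁻¹ ∧
    (-(Real.log (1 - (1 - α) ^ (Γ - 1) * (1 - Real.exp (-β)))))⁻¹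
      ≤ Real.exp 1 / ((1 - α) * (1 - Real.exp (-β))) := by
  have hq : 0 < 1 - α := by linarith [hα.2]
  have hc : 0 < 1 - exp (-β) := by linarith [exp_lt_one_iff.2 (neg_lt_zero.2 hβ)]
  set x := (1 - α) ^ (Γ - 1) * (1 - exp (-β))
  have hx0 : 0 < x := by positivity
  have hx_le : x ≤ 1 - exp (-β) :=
    mul_le_of_le_one_left hc.le (pow_le_one₀ hq.le (by linarith [hα.1]))
  have hx_lt : x < 1 := by linarith [exp_pos (-β)]
  have hL : 0 < -log (1 - x) := hx0.trans_le (le_neg_log_one_sub hx_lt)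
  have hΓ_lt : ((Γ - 1 : ℕ) : ℝ) < 1 / α := by
    have : 0 < ⌈1 / α⌉₊ := Nat.ceil_pos.2 (by simpa using hα.1)
    exact Nat.lt_ceil.1 (by omega)
  have hpow := one_sub_le_exp_one_mul_pow hα hΓ_lt.le
  refine ⟨inv_anti₀ hL (neg_log_one_sub_le_of_le_one_sub_exp hx_le), ?_⟩
  calc (-log (1 - x))⁻¹ ≤ x⁻¹ := inv_anti₀ hx0 (le_neg_log_one_sub hx_lt)
    _ ≤ ((1 - α) * (1 - exp (-β)) / exp 1)⁻¹ := by
      refine inv_anti₀ (by positivity) ((div_le_iff₀ (exp_pos 1)).2 ?_)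
      calc (1 - α) * (1 - exp (-β)) ≤ exp 1 * (1 - α) ^ (Γ - 1) * (1 - exp (-β)) :=
            mul_le_mul_of_nonneg_right hpow hc.le
        _ = x * exp 1 := by ring
    _ = exp 1 / ((1 - α) * (1 - exp (-β))) := inv_div _ _

theorem stmt5 (α β : ℝ) (hα : α ∈ Set.Ioo (0:ℝ) 1) (hβ : 0 < β)
    (Γ : ℕ) (hΓ : 1 ≤ Γ) (hΓle : Γ ≤ ⌈1 / α⌉₊) :
    β⁻¹ ≤ (-(Real.log (1 - (1 - α) ^ (Γ - 1) * (1 - Real.exp (-β)))))⁻¹ ∧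
    (-(Real.log (1 - (1 - α) ^ (Γ - 1) * (1 - Real.exp (-β)))))⁻¹
      ≤ Real.exp 1 / ((1 - α) * (1 - Real.exp (-β))) :=
  stmt5_general α β hα hβ Γ hΓle
end

section
/- Let α ∈ (0,1) and β > 0, and define f(Γ) = −Γ·ln(1 − (1−α)^{Γ−1}·(1 − e^{−β})) for positive integers Γ. Then any maximizer Γ̂ of f over the positive integers satisfies Γ̂ ≤ ⌈1/α⌉. -/
/-! If `Γ̂ > ⌈1/α⌉` then `Γ̂ - 1` does strictly better. Writing `v = (1-α)^(Γ̂-2)(1-e^{-β})`,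
strict concavity of `log` gives `log (1 - (1-α) v) > (1-α) log (1 - v)`, so
`f(Γ̂) < -Γ̂ (1-α) log (1 - v) < -(Γ̂-1) log (1 - v) = f(Γ̂-1)`, the last step because `Γ̂ α > 1`. -/

open Real

lemma mul_log_one_sub_lt_log_one_sub_mul {t x : ℝ} (ht0 : 0 < t) (ht1 : t < 1)
    (hx0 : 0 < x) (hx1 : x < 1) : t * log (1 - x) < log (1 - t * x) := by
  have hconcave := strictConcaveOn_log_Ioi.2 (Set.mem_Ioi.mpr (sub_pos.mpr hx1))
    (Set.mem_Ioi.mpr one_pos) (by linarith) ht0 (sub_pos.mpr ht1) (add_sub_cancel t 1)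
  simp only [smul_eq_mul, log_one, mul_zero, add_zero, mul_one] at hconcave
  calc t * log (1 - x) < log (t * (1 - x) + (1 - t)) := hconcave
    _ = log (1 - t * x) := by ring_nf

/-- The function `f` of the statement, with `c = 1 - e^{-β}`. -/
noncomputable def objective (α c : ℝ) (Γ : ℕ) : ℝ :=
  -(Γ : ℝ) * log (1 - (1 - α) ^ (Γ - 1) * c)

lemma objective_succ_lt {α c : ℝ} (hα0 : 0 < α) (hα1 : α < 1) (hc0 : 0 < c) (hc1 : c < 1)
    {m : ℕ} (hm : 1 < (m + 1) * α) : objective α c (m + 1) < objective α c m := by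
  obtain ⟨k, rfl⟩ : ∃ k, m = k + 1 :=
    Nat.exists_eq_succ_of_ne_zero (by rintro rfl; norm_num at hm; linarith)
  set v := (1 - α) ^ k * c with hv
  have hv0 : 0 < v := mul_pos (pow_pos (by linarith) k) hc0
  have hv1 : v < 1 :=
    lt_of_le_of_lt (mul_le_of_le_one_left hc0.le (pow_le_one₀ (by linarith) (by linarith))) hc1
  have hlog_neg : log (1 - v) < 0 := log_neg (by linarith) (by linarith)
  have hconcave := mul_log_one_sub_lt_log_one_sub_mul (sub_pos.mpr hα1) (by linarith) hv0 hv1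
  have hstep : (1 - α) ^ (k + 1) * c = (1 - α) * v := by rw [hv, pow_succ]; ring
  simp only [objective, Nat.add_sub_cancel, hstep]
  push_cast at hm ⊢
  calc -((k + 1 + 1 : ℝ)) * log (1 - (1 - α) * v)
      < -((k + 1 + 1 : ℝ)) * ((1 - α) * log (1 - v)) :=
        mul_lt_mul_of_neg_left hconcave (by linarith)
    _ ≤ -((k + 1 : ℝ)) * log (1 - v) := by nlinarith

theorem stmt7_general (α β : ℝ) (hα : α ∈ Set.Ioo (0:ℝ) 1) (hβ : 0 < β)
    (Γhat : ℕ)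
    (hmax : ∀ Γ : ℕ, 1 ≤ Γ →
      -(Γ : ℝ) * Real.log (1 - (1 - α) ^ (Γ - 1) * (1 - Real.exp (-β)))
        ≤ -(Γhat : ℝ) * Real.log (1 - (1 - α) ^ (Γhat - 1) * (1 - Real.exp (-β)))) :
    Γhat ≤ ⌈1 / α⌉₊ := by
  obtain ⟨hα0, hα1⟩ := hα
  by_contra! hlt
  have hceil_pos : 0 < ⌈1 / α⌉₊ := Nat.ceil_pos.mpr (by positivity)
  obtain ⟨m, rfl⟩ : ∃ m, Γhat = m + 1 := Nat.exists_eq_succ_of_ne_zero (by omega)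
  have hm : 1 < (m + 1) * α := by
    have := Nat.lt_of_ceil_lt hlt
    push_cast at this
    rwa [div_lt_iff₀ hα0] at this
  have hc0 : 0 < 1 - exp (-β) := sub_pos.mpr (exp_lt_one_iff.mpr (neg_neg_of_pos hβ))
  have hc1 : 1 - exp (-β) < 1 := sub_lt_self 1 (exp_pos _)
  exact (objective_succ_lt hα0 hα1 hc0 hc1 hm).not_ge (hmax m (by omega))

theorem stmt7 (α β : ℝ) (hα : α ∈ Set.Ioo (0:ℝ) 1) (hβ : 0 < β)
    (Γhat : ℕ) (hΓhat : 1 ≤ Γhat)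
    (hmax : ∀ Γ : ℕ, 1 ≤ Γ →
      -(Γ : ℝ) * Real.log (1 - (1 - α) ^ (Γ - 1) * (1 - Real.exp (-β)))
        ≤ -(Γhat : ℝ) * Real.log (1 - (1 - α) ^ (Γhat - 1) * (1 - Real.exp (-β)))) :
    Γhat ≤ ⌈1 / α⌉₊ :=
  stmt7_general α β hα hβ Γhat hmax
end
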